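/- Let K ≥ 2, ℓ_k ∈ ℝ⁵ with |ℓ_k| < 1 and ℓ_k ≠ ℓ_m for k ≠ m, y_k^∞ ∈ ℝ⁵, and α ∈ (0,1). Then there exist C > 0 and T₁ ≥ 1 such that the function Φ = Θψ, where ψ(t,x) = Π_{k=1}^K (1 − q_k(t,x)^α), satisfies for all t ≥ T₁ and all x with |x| ≠ Lt: |∇_x Φ(t,x)| ≤ C α Θ(t,x) q(t,x) and |∂ₜ Φ(t,x)| ≤ C α Θ(t,x) (t^{−1} + q(t,x)). -/

import Mathlib

noncomputable section

open Real Filter MeasureTheory Set Classical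
open scoped BigOperators Topology

set_option synthInstance.maxHeartbeats 1000000
set_option maxHeartbeats 1000000

abbrev E5 := EuclideanSpace ℝ (Fin 5)

/-- `L̄ = max_k |ℓ_k|`. -/
def Lbar {K : ℕ} (l : Fin K → E5) : ℝ := sSup {r : ℝ | ∃ k, r = ‖l k‖}

/-- `σ = (1/100) min({1 - L̄} ∪ {|ℓ_k - ℓ_m| : k ≠ m})`. -/
def sigP {K : ℕ} (l : Fin K → E5) : ℝ :=
  (1 / 100 : ℝ) * sInf ({1 - Lbar l} ∪ {r : ℝ | ∃ k m, k ≠ m ∧ r = ‖l k - l m‖})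

/-- `L = 1 - σ`. -/
def LL {K : ℕ} (l : Fin K → E5) : ℝ := 1 - sigP l

/-- The weight `Θ`. -/
def Theta (L α t : ℝ) (x : E5) : ℝ :=
  if ‖x‖ < L * t then 1 else (L * t / ‖x‖) ^ α

/-- The weight `ρ`. -/
def rho (L α t : ℝ) (x : E5) : ℝ :=
  if ‖x‖ < L * t then t else t ^ α * (‖x‖ / L) ^ (1 - α)

/-- `q_k(t,x) = (1 + |x - ℓ_k t - y_k^∞|²)^{-1/2}`. -/
def qk {K : ℕ} (l : Fin K → E5) (yI : Fin K → E5) (k : Fin K) (t : ℝ) (x : E5) : ℝ :=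
  (1 + ‖x - t • l k - yI k‖ ^ 2) ^ (-(1 : ℝ) / 2)

/-- `q = Σ_k q_k`. -/
def qsum {K : ℕ} (l : Fin K → E5) (yI : Fin K → E5) (t : ℝ) (x : E5) : ℝ :=
  ∑ k, qk l yI k t x

/-- `ψ = Π_k (1 - q_k^α)`. -/
def psiF {K : ℕ} (l : Fin K → E5) (yI : Fin K → E5) (α t : ℝ) (x : E5) : ℝ :=
  ∏ k, (1 - qk l yI k t x ^ α)

/-- `Φ = Θ ψ`. -/
def PhiF {K : ℕ} (l : Fin K → E5) (yI : Fin K → E5) (α t : ℝ) (x : E5) : ℝ :=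
  Theta (LL l) α t x * psiF l yI α t x

/-! ### Auxiliary lemmas -/

section Aux

variable {K : ℕ} (l yI : Fin K → E5)

lemma qk_pos (k : Fin K) (t : ℝ) (x : E5) : 0 < qk l yI k t x :=
  Real.rpow_pos_of_pos (by positivity) _

lemma qk_le_one (k : Fin K) (t : ℝ) (x : E5) : qk l yI k t x ≤ 1 :=
  Real.rpow_le_one_of_one_le_of_nonpos (by nlinarith [sq_nonneg ‖x - t • l k - yI k‖])
    (by norm_num)

lemma qsum_nonneg (t : ℝ) (x : E5) : 0 ≤ qsum l yI t x :=
  Finset.sum_nonneg fun k _ => (qk_pos l yI k t x).le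

lemma qk_le_qsum (k : Fin K) (t : ℝ) (x : E5) : qk l yI k t x ≤ qsum l yI t x :=
  Finset.single_le_sum (fun m _ => (qk_pos l yI m t x).le) (Finset.mem_univ k)

lemma factor_mem {α : ℝ} (hα : 0 ≤ α) (k : Fin K) (t : ℝ) (x : E5) :
    0 ≤ 1 - qk l yI k t x ^ α ∧ 1 - qk l yI k t x ^ α ≤ 1 := by
  have h1 : qk l yI k t x ^ α ≤ 1 :=
    Real.rpow_le_one (qk_pos l yI k t x).le (qk_le_one l yI k t x) hα
  have h2 : 0 ≤ qk l yI k t x ^ α := Real.rpow_nonneg (qk_pos l yI k t x).le _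
  constructor <;> linarith

lemma psiF_mem {α t : ℝ} (hα : 0 ≤ α) (x : E5) :
    0 ≤ psiF l yI α t x ∧ psiF l yI α t x ≤ 1 := by
  constructor
  · exact Finset.prod_nonneg fun k _ => (factor_mem l yI hα k t x).1
  · exact Finset.prod_le_one (fun k _ => (factor_mem l yI hα k t x).1)
      (fun k _ => (factor_mem l yI hα k t x).2)

/-- key rpow bound : `‖v‖ * r^(-1/2-1) ≤ r⁻¹` where `r = 1 + ‖v‖²`. -/
lemma key_bound (v : E5) :
    ‖v‖ * (1 + ‖v‖ ^ 2) ^ ((-(1:ℝ)/2) - 1) ≤ (1 + ‖v‖ ^ 2) ^ (-(1:ℝ)) := by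
  set r : ℝ := 1 + ‖v‖ ^ 2 with hr
  have hrpos : (0:ℝ) < r := by positivity
  have h1 : ‖v‖ ≤ r ^ ((1:ℝ)/2) := by
    have h2 : ‖v‖ ^ (2:ℕ) ≤ r := by nlinarith
    have h3 : ((‖v‖ ^ (2:ℕ)) : ℝ) ^ ((1:ℝ)/2) ≤ r ^ ((1:ℝ)/2) :=
      Real.rpow_le_rpow (by positivity) h2 (by norm_num)
    calc ‖v‖ = ((‖v‖ ^ (2:ℕ)) : ℝ) ^ ((1:ℝ)/2) := by
            rw [← Real.rpow_natCast ‖v‖ 2, ← Real.rpow_mul (norm_nonneg v)]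
            norm_num
      _ ≤ r ^ ((1:ℝ)/2) := h3
  calc ‖v‖ * r ^ ((-(1:ℝ)/2) - 1) ≤ r ^ ((1:ℝ)/2) * r ^ ((-(1:ℝ)/2) - 1) := by
        apply mul_le_mul_of_nonneg_right h1 (Real.rpow_nonneg hrpos.le _)
    _ = r ^ (-(1:ℝ)) := by
        rw [← Real.rpow_add hrpos]; norm_num

/-- second key rpow bound : `q^(α-1) * r⁻¹ ≤ q` where `q = r^(-1/2)`, `r ≥ 1`. -/
lemma key_bound2 {α : ℝ} (hα : 0 ≤ α) (v : E5) :
    ((1 + ‖v‖ ^ 2) ^ (-(1:ℝ)/2)) ^ (α - 1) * (1 + ‖v‖ ^ 2) ^ (-(1:ℝ)) ≤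
      (1 + ‖v‖ ^ 2) ^ (-(1:ℝ)/2) := by
  set r : ℝ := 1 + ‖v‖ ^ 2 with hr
  have hr1 : (1:ℝ) ≤ r := by nlinarith [sq_nonneg ‖v‖]
  have hrpos : (0:ℝ) < r := by linarith
  have h1 : ((r ^ (-(1:ℝ)/2)) : ℝ) ^ (α - 1) = r ^ ((-(1:ℝ)/2) * (α - 1)) := by
    rw [← Real.rpow_mul hrpos.le]
  rw [h1, ← Real.rpow_add hrpos]
  exact Real.rpow_le_rpow_of_exponent_le hr1 (by nlinarith)

/-- Spatial derivative of `qk`. -/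
lemma qk_hasFDerivAt (k : Fin K) (t : ℝ) (x : E5) :
    HasFDerivAt (fun z => qk l yI k t z)
      (((-(1:ℝ)/2) * (1 + ‖x - t • l k - yI k‖ ^ 2) ^ ((-(1:ℝ)/2) - 1)) •
        (2 • (innerSL ℝ (x - t • l k - yI k)).comp (ContinuousLinearMap.id ℝ E5))) x := by
  have h1 : HasFDerivAt (fun z : E5 => z - t • l k - yI k) (ContinuousLinearMap.id ℝ E5) x :=
    ((hasFDerivAt_id x).sub_const _).sub_const _
  exact (h1.norm_sq.const_add (1:ℝ)).rpow_const (Or.inl (by positivity))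

lemma qk_fderiv_norm (k : Fin K) (t : ℝ) (x : E5) :
    ‖(((-(1:ℝ)/2) * (1 + ‖x - t • l k - yI k‖ ^ 2) ^ ((-(1:ℝ)/2) - 1)) •
        (2 • (innerSL ℝ (x - t • l k - yI k)).comp (ContinuousLinearMap.id ℝ E5)))‖ ≤
      (1 + ‖x - t • l k - yI k‖ ^ 2) ^ (-(1:ℝ)) := by
  set v : E5 := x - t • l k - yI k with hv
  have h2 : ‖(2 • (innerSL ℝ v).comp (ContinuousLinearMap.id ℝ E5) : E5 →L[ℝ] ℝ)‖ ≤ 2 * ‖v‖ := by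
    rw [two_smul]
    calc ‖(innerSL ℝ v).comp (ContinuousLinearMap.id ℝ E5) +
          (innerSL ℝ v).comp (ContinuousLinearMap.id ℝ E5)‖ ≤
        ‖(innerSL ℝ v).comp (ContinuousLinearMap.id ℝ E5)‖ +
          ‖(innerSL ℝ v).comp (ContinuousLinearMap.id ℝ E5)‖ := norm_add_le _ _
      _ = 2 * ‖v‖ := by rw [ContinuousLinearMap.comp_id, innerSL_apply_norm]; ring
  have h3 : ‖(-(1:ℝ)/2) * (1 + ‖v‖ ^ 2) ^ ((-(1:ℝ)/2) - 1)‖ =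
      (1/2) * (1 + ‖v‖ ^ 2) ^ ((-(1:ℝ)/2) - 1) := by
    rw [Real.norm_eq_abs, abs_mul]
    rw [abs_of_nonneg (Real.rpow_nonneg (by positivity : (0:ℝ) ≤ 1 + ‖v‖ ^ 2) _)]
    norm_num
  calc ‖(((-(1:ℝ)/2) * (1 + ‖v‖ ^ 2) ^ ((-(1:ℝ)/2) - 1)) •
        (2 • (innerSL ℝ v).comp (ContinuousLinearMap.id ℝ E5)))‖ ≤
      ‖(-(1:ℝ)/2) * (1 + ‖v‖ ^ 2) ^ ((-(1:ℝ)/2) - 1)‖ *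
        ‖(2 • (innerSL ℝ v).comp (ContinuousLinearMap.id ℝ E5) : E5 →L[ℝ] ℝ)‖ :=
        ContinuousLinearMap.opNorm_smul_le _ _
    _ ≤ ((1/2) * (1 + ‖v‖ ^ 2) ^ ((-(1:ℝ)/2) - 1)) * (2 * ‖v‖) := by
        rw [h3]
        apply mul_le_mul_of_nonneg_left h2 (by positivity)
    _ = ‖v‖ * (1 + ‖v‖ ^ 2) ^ ((-(1:ℝ)/2) - 1) := by ring
    _ ≤ (1 + ‖v‖ ^ 2) ^ (-(1:ℝ)) := key_bound v

/-- Spatial derivative of a factor `1 - qk^α`, with bound. -/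
lemma factor_hasFDerivAt {α : ℝ} (hα : 0 < α) (k : Fin K) (t : ℝ) (x : E5) :
    ∃ G : E5 →L[ℝ] ℝ, HasFDerivAt (fun z => 1 - qk l yI k t z ^ α) G x ∧
      ‖G‖ ≤ α * qk l yI k t x := by
  set v : E5 := x - t • l k - yI k with hv
  set D := (((-(1:ℝ)/2) * (1 + ‖v‖ ^ 2) ^ ((-(1:ℝ)/2) - 1)) •
    (2 • (innerSL ℝ v).comp (ContinuousLinearMap.id ℝ E5))) with hD
  have h1 : HasFDerivAt (fun z => qk l yI k t z ^ α)
      ((α * qk l yI k t x ^ (α - 1)) • D) x :=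
    (qk_hasFDerivAt l yI k t x).rpow_const (Or.inl (qk_pos l yI k t x).ne')
  refine ⟨-((α * qk l yI k t x ^ (α - 1)) • D), h1.const_sub 1, ?_⟩
  rw [norm_neg]
  have hq : qk l yI k t x = (1 + ‖v‖ ^ 2) ^ (-(1:ℝ)/2) := rfl
  have h2 : ‖α * qk l yI k t x ^ (α - 1)‖ = α * qk l yI k t x ^ (α - 1) := by
    rw [Real.norm_eq_abs, abs_of_nonneg]
    exact mul_nonneg hα.le (Real.rpow_nonneg (qk_pos l yI k t x).le _)
  calc ‖(α * qk l yI k t x ^ (α - 1)) • D‖ ≤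
      ‖α * qk l yI k t x ^ (α - 1)‖ * ‖D‖ := ContinuousLinearMap.opNorm_smul_le _ _
    _ = α * qk l yI k t x ^ (α - 1) * ‖D‖ := by rw [h2]
    _ ≤
      α * qk l yI k t x ^ (α - 1) * ((1 + ‖v‖ ^ 2) ^ (-(1:ℝ))) := by
        apply mul_le_mul_of_nonneg_left (qk_fderiv_norm l yI k t x)
        exact mul_nonneg hα.le (Real.rpow_nonneg (qk_pos l yI k t x).le _)
    _ = α * (qk l yI k t x ^ (α - 1) * (1 + ‖v‖ ^ 2) ^ (-(1:ℝ))) := by ring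
    _ ≤ α * qk l yI k t x := by
        apply mul_le_mul_of_nonneg_left _ hα.le
        rw [hq]
        exact key_bound2 hα.le v

/-- Spatial derivative of `ψ`, with bound. -/
lemma psi_hasFDerivAt {α : ℝ} (hα : 0 < α) (t : ℝ) (x : E5) :
    ∃ P : E5 →L[ℝ] ℝ, HasFDerivAt (fun z => psiF l yI α t z) P x ∧
      ‖P‖ ≤ α * qsum l yI t x := by
  choose G hG hGb using fun k => factor_hasFDerivAt l yI hα k t x
  refine ⟨∑ k, (∏ j ∈ Finset.univ.erase k, (1 - qk l yI j t x ^ α)) • G k, ?_, ?_⟩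
  · have := HasFDerivAt.finset_prod (u := Finset.univ)
      (g := fun k z => 1 - qk l yI k t z ^ α) (g' := G) (x := x) (fun k _ => hG k)
    exact this
  · calc ‖∑ k, (∏ j ∈ Finset.univ.erase k, (1 - qk l yI j t x ^ α)) • G k‖ ≤
        ∑ k, ‖(∏ j ∈ Finset.univ.erase k, (1 - qk l yI j t x ^ α)) • G k‖ :=
          norm_sum_le _ _
      _ ≤ ∑ k, α * qk l yI k t x := by
          apply Finset.sum_le_sum
          intro k _
          have hp1 : ‖∏ j ∈ Finset.univ.erase k, (1 - qk l yI j t x ^ α)‖ ≤ 1 := by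
            rw [Real.norm_eq_abs, abs_of_nonneg
              (Finset.prod_nonneg fun j _ => (factor_mem l yI hα.le j t x).1)]
            exact Finset.prod_le_one (fun j _ => (factor_mem l yI hα.le j t x).1)
              (fun j _ => (factor_mem l yI hα.le j t x).2)
          calc ‖(∏ j ∈ Finset.univ.erase k, (1 - qk l yI j t x ^ α)) • G k‖ ≤
              ‖∏ j ∈ Finset.univ.erase k, (1 - qk l yI j t x ^ α)‖ * ‖G k‖ :=
                ContinuousLinearMap.opNorm_smul_le _ _
            _ ≤
              1 * ‖G k‖ := mul_le_mul_of_nonneg_right hp1 (norm_nonneg _)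
            _ = ‖G k‖ := one_mul _
            _ ≤ α * qk l yI k t x := hGb k
      _ = α * qsum l yI t x := by rw [qsum, Finset.mul_sum]

/-- Time derivative of `qk`, with bound. -/
lemma qk_hasDerivAt {k : Fin K} (hlk : ‖l k‖ ≤ 1) (t : ℝ) (x : E5) :
    ∃ d : ℝ, HasDerivAt (fun s => qk l yI k s x) d t ∧
      |d| ≤ (1 + ‖x - t • l k - yI k‖ ^ 2) ^ (-(1:ℝ)) := by
  set v : E5 := x - t • l k - yI k with hv
  have h1 : HasDerivAt (fun s : ℝ => x - s • l k - yI k) (-((1:ℝ) • l k)) t := by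
    have := ((hasDerivAt_id t).smul_const (l k)).const_sub x
    exact this.sub_const (yI k)
  have h2 := h1.norm_sq
  have h3 := h2.const_add (1:ℝ)
  have h4 := h3.rpow_const (p := -(1:ℝ)/2) (Or.inl (by positivity))
  refine ⟨_, h4, ?_⟩
  have hinner : |(2 : ℝ) * inner ℝ (x - t • l k - yI k) (-((1:ℝ) • l k))| ≤ 2 * ‖v‖ := by
    rw [abs_mul]
    have := abs_real_inner_le_norm (x - t • l k - yI k) (-((1:ℝ) • l k))
    have h5 : ‖-((1:ℝ) • l k)‖ ≤ 1 := by simpa using hlk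
    calc |(2:ℝ)| * |inner ℝ (x - t • l k - yI k) (-((1:ℝ) • l k))| ≤
        2 * (‖v‖ * ‖-((1:ℝ) • l k)‖) := by
          rw [abs_two]
          exact mul_le_mul_of_nonneg_left this (by norm_num)
      _ ≤ 2 * (‖v‖ * 1) := by
          apply mul_le_mul_of_nonneg_left _ (by norm_num)
          exact mul_le_mul_of_nonneg_left h5 (norm_nonneg _)
      _ = 2 * ‖v‖ := by ring
  rw [abs_mul, abs_mul]
  have habs : |(-(1:ℝ)/2)| = 1/2 := by norm_num
  have hrabs : |(1 + ‖v‖ ^ 2) ^ ((-(1:ℝ)/2) - 1)| = (1 + ‖v‖ ^ 2) ^ ((-(1:ℝ)/2) - 1) :=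
    abs_of_nonneg (Real.rpow_nonneg (by positivity) _)
  rw [habs, hrabs]
  calc |(2:ℝ) * inner ℝ (x - t • l k - yI k) (-((1:ℝ) • l k))| * (1/2) *
        (1 + ‖v‖ ^ 2) ^ ((-(1:ℝ)/2) - 1) ≤
      (2 * ‖v‖) * (1/2) * (1 + ‖v‖ ^ 2) ^ ((-(1:ℝ)/2) - 1) := by
        apply mul_le_mul_of_nonneg_right _ (Real.rpow_nonneg (by positivity) _)
        exact mul_le_mul_of_nonneg_right hinner (by norm_num)
    _ = ‖v‖ * (1 + ‖v‖ ^ 2) ^ ((-(1:ℝ)/2) - 1) := by ring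
    _ ≤ (1 + ‖v‖ ^ 2) ^ (-(1:ℝ)) := key_bound v

/-- Time derivative of a factor, with bound. -/
lemma factor_hasDerivAt {α : ℝ} (hα : 0 < α) {k : Fin K} (hlk : ‖l k‖ ≤ 1) (t : ℝ) (x : E5) :
    ∃ d : ℝ, HasDerivAt (fun s => 1 - qk l yI k s x ^ α) d t ∧
      |d| ≤ α * qk l yI k t x := by
  obtain ⟨d0, hd0, hd0b⟩ := qk_hasDerivAt l yI hlk t x
  have h1 : HasDerivAt (fun s => qk l yI k s x ^ α)
      (d0 * α * qk l yI k t x ^ (α - 1)) t :=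
    hd0.rpow_const (Or.inl (qk_pos l yI k t x).ne')
  refine ⟨-(d0 * α * qk l yI k t x ^ (α - 1)), h1.const_sub 1, ?_⟩
  set v : E5 := x - t • l k - yI k with hv
  have hq : qk l yI k t x = (1 + ‖v‖ ^ 2) ^ (-(1:ℝ)/2) := rfl
  rw [abs_neg, abs_mul, abs_mul]
  have h2 : |qk l yI k t x ^ (α - 1)| = qk l yI k t x ^ (α - 1) :=
    abs_of_nonneg (Real.rpow_nonneg (qk_pos l yI k t x).le _)
  rw [h2, abs_of_nonneg hα.le]
  calc |d0| * α * qk l yI k t x ^ (α - 1) ≤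
      ((1 + ‖v‖ ^ 2) ^ (-(1:ℝ))) * α * qk l yI k t x ^ (α - 1) := by
        apply mul_le_mul_of_nonneg_right
          (mul_le_mul_of_nonneg_right hd0b hα.le)
          (Real.rpow_nonneg (qk_pos l yI k t x).le _)
    _ = α * (qk l yI k t x ^ (α - 1) * (1 + ‖v‖ ^ 2) ^ (-(1:ℝ))) := by ring
    _ ≤ α * qk l yI k t x := by
        apply mul_le_mul_of_nonneg_left _ hα.le
        rw [hq]
        exact key_bound2 hα.le v

/-- Time derivative of `ψ`, with bound. -/
lemma psi_hasDerivAt {α : ℝ} (hα : 0 < α) (hl : ∀ k, ‖l k‖ ≤ 1) (t : ℝ) (x : E5) :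
    ∃ d : ℝ, HasDerivAt (fun s => psiF l yI α s x) d t ∧
      |d| ≤ α * qsum l yI t x := by
  choose d hd hdb using fun k => factor_hasDerivAt l yI hα (hl k) t x
  refine ⟨∑ k, (∏ j ∈ Finset.univ.erase k, (1 - qk l yI j t x ^ α)) • d k, ?_, ?_⟩
  · exact HasDerivAt.fun_finsetProd (u := Finset.univ)
      (f := fun k s => 1 - qk l yI k s x ^ α) (f' := d) (fun k _ => hd k)
  · calc |∑ k, (∏ j ∈ Finset.univ.erase k, (1 - qk l yI j t x ^ α)) • d k| ≤
        ∑ k, |(∏ j ∈ Finset.univ.erase k, (1 - qk l yI j t x ^ α)) • d k| := by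
          exact Finset.abs_sum_le_sum_abs _ _
      _ ≤ ∑ k, α * qk l yI k t x := by
          apply Finset.sum_le_sum
          intro k _
          rw [smul_eq_mul, abs_mul]
          have hp1 : |∏ j ∈ Finset.univ.erase k, (1 - qk l yI j t x ^ α)| ≤ 1 := by
            rw [abs_of_nonneg
              (Finset.prod_nonneg fun j _ => (factor_mem l yI hα.le j t x).1)]
            exact Finset.prod_le_one (fun j _ => (factor_mem l yI hα.le j t x).1)
              (fun j _ => (factor_mem l yI hα.le j t x).2)
          calc |∏ j ∈ Finset.univ.erase k, (1 - qk l yI j t x ^ α)| * |d k| ≤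
              1 * |d k| := mul_le_mul_of_nonneg_right hp1 (abs_nonneg _)
            _ = |d k| := one_mul _
            _ ≤ α * qk l yI k t x := hdb k
      _ = α * qsum l yI t x := by rw [qsum, Finset.mul_sum]

end Aux

/-! ### Bounds on `L` -/

lemma LL_bounds {K : ℕ} (hK : 2 ≤ K) (l : Fin K → E5) (hl : ∀ k, ‖l k‖ < 1) :
    (99:ℝ)/100 ≤ LL l ∧ LL l ≤ 1 := by
  have hK0 : 0 < K := by omega
  set k0 : Fin K := ⟨0, hK0⟩
  have hbddA : BddAbove {r : ℝ | ∃ k, r = ‖l k‖} := ⟨1, fun r ⟨k, hk⟩ => hk ▸ (hl k).le⟩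
  have hLbar_le : Lbar l ≤ 1 := Real.sSup_le (fun r ⟨k, hk⟩ => hk ▸ (hl k).le) one_pos.le
  have hLbar_ge : 0 ≤ Lbar l :=
    le_trans (norm_nonneg (l k0)) (le_csSup hbddA ⟨k0, rfl⟩)
  set S : Set ℝ := {1 - Lbar l} ∪ {r : ℝ | ∃ k m, k ≠ m ∧ r = ‖l k - l m‖} with hS
  have hSnonneg : ∀ r ∈ S, 0 ≤ r := by
    rintro r (rfl | ⟨k, m, _, rfl⟩)
    · linarith
    · exact norm_nonneg _
  have hbddB : BddBelow S := ⟨0, hSnonneg⟩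
  have h1 : sInf S ≤ 1 - Lbar l := csInf_le hbddB (Or.inl rfl)
  have h2 : 0 ≤ sInf S := Real.sInf_nonneg hSnonneg
  have h3 : sigP l ≤ 1/100 := by
    rw [sigP]
    nlinarith
  have h4 : 0 ≤ sigP l := by
    rw [sigP]
    nlinarith
  constructor <;> (rw [LL]; linarith)

/-- In the outer region, `‖x‖⁻¹ ≤ 6 q`. -/
lemma inv_norm_le_qsum {K : ℕ} (hK : 2 ≤ K) (l yI : Fin K → E5) (hl : ∀ k, ‖l k‖ < 1)
    {t : ℝ} {x : E5} (hL : (99:ℝ)/100 ≤ LL l) (hout : LL l * t ≤ ‖x‖)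
    (ht1 : 1 ≤ t) (hy : ‖yI (⟨0, by omega⟩ : Fin K)‖ ≤ t) :
    ‖x‖⁻¹ ≤ 6 * qsum l yI t x := by
  have hK0 : 0 < K := by omega
  set k0 : Fin K := ⟨0, hK0⟩
  have hxge : (99:ℝ)/100 ≤ ‖x‖ := by nlinarith
  have hx0 : (0:ℝ) < ‖x‖ := by linarith
  set v : E5 := x - t • l k0 - yI k0 with hv
  have htx : t ≤ (100/99) * ‖x‖ := by nlinarith
  have hvle : ‖v‖ ≤ 4 * ‖x‖ := by
    have h1 : ‖v‖ ≤ ‖x‖ + ‖t • l k0‖ + ‖yI k0‖ := by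
      calc ‖v‖ = ‖x - t • l k0 - yI k0‖ := rfl
        _ ≤ ‖x - t • l k0‖ + ‖yI k0‖ := norm_sub_le _ _
        _ ≤ ‖x‖ + ‖t • l k0‖ + ‖yI k0‖ := by
            have := norm_sub_le x (t • l k0); linarith
    have h2 : ‖t • l k0‖ ≤ t := by
      rw [norm_smul, Real.norm_eq_abs, abs_of_nonneg (by linarith : (0:ℝ) ≤ t)]
      nlinarith [(hl k0).le, norm_nonneg (l k0)]
    nlinarith
  have hq : (6 * ‖x‖)⁻¹ ≤ qk l yI k0 t x := by
    have h3 : (1 + ‖v‖ ^ 2) ≤ (6 * ‖x‖) ^ (2:ℕ) := by nlinarith [norm_nonneg v]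
    have h4 : ((6 * ‖x‖) ^ (2:ℕ) : ℝ) ^ (-(1:ℝ)/2) ≤ (1 + ‖v‖ ^ 2) ^ (-(1:ℝ)/2) :=
      Real.rpow_le_rpow_of_nonpos (by positivity) h3 (by norm_num)
    have h5 : ((6 * ‖x‖) ^ (2:ℕ) : ℝ) ^ (-(1:ℝ)/2) = (6 * ‖x‖)⁻¹ := by
      rw [← Real.rpow_natCast (6 * ‖x‖) 2, ← Real.rpow_mul (by positivity)]
      norm_num
      rw [Real.rpow_neg_one, mul_inv]
      ring
    rw [← h5]
    exact h4
  have h6 : qk l yI k0 t x ≤ qsum l yI t x := qk_le_qsum l yI k0 t x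
  have h7 : (6 * ‖x‖)⁻¹ = 6⁻¹ * ‖x‖⁻¹ := by
    rw [mul_inv]
  nlinarith [inv_pos.mpr hx0]

lemma grad_norm_eq (f : E5 → ℝ) (x : E5) : ‖gradient f x‖ = ‖fderiv ℝ f x‖ := by
  rw [gradient]
  exact LinearIsometryEquiv.norm_map _ _

lemma theta_out (Lv α t : ℝ) (z : E5) (hLt : 0 < Lv * t) (h : ¬ ‖z‖ < Lv * t) :
    Theta Lv α t z = (Lv * t) ^ α * ((‖z‖ ^ 2 : ℝ)) ^ (-(α/2)) := by
  have hz : 0 < ‖z‖ := lt_of_lt_of_le hLt (not_lt.mp h)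
  have he : ((‖z‖ ^ 2 : ℝ)) ^ (-(α/2)) = ‖z‖ ^ (-α) := by
    rw [← Real.rpow_natCast ‖z‖ 2, ← Real.rpow_mul hz.le]
    norm_num
    congr 1
    ring
  rw [Theta, if_neg h, Real.div_rpow hLt.le hz.le, he, Real.rpow_neg hz.le, div_eq_mul_inv]

/-- Main theorem. -/
theorem Phi_derivative_estimates
    (K : ℕ) (hK : 2 ≤ K)
    (l : Fin K → E5) (hl : ∀ k, ‖l k‖ < 1)
    (hll : ∀ k m, k ≠ m → l k ≠ l m)
    (yI : Fin K → E5) (α : ℝ) (hα : α ∈ Set.Ioo (0 : ℝ) 1) :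
    ∃ C > (0 : ℝ), ∃ T₁ ≥ (1 : ℝ), ∀ t ≥ T₁, ∀ x : E5, ‖x‖ ≠ LL l * t →
      ‖gradient (fun z => PhiF l yI α t z) x‖ ≤ C * α * Theta (LL l) α t x * qsum l yI t x ∧
      |deriv (fun s => PhiF l yI α s x) t| ≤
        C * α * Theta (LL l) α t x * (t⁻¹ + qsum l yI t x) := by
  obtain ⟨hα0, hα1⟩ := hα
  obtain ⟨hL99, hLle1⟩ := LL_bounds hK l hl
  have hK0 : 0 < K := by omega
  refine ⟨10, by norm_num, max 1 ‖yI (⟨0, hK0⟩ : Fin K)‖, le_max_left _ _, ?_⟩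
  intro t ht x hne
  have ht1 : (1:ℝ) ≤ t := le_trans (le_max_left _ _) ht
  have hy : ‖yI (⟨0, hK0⟩ : Fin K)‖ ≤ t := le_trans (le_max_right _ _) ht
  have htpos : (0:ℝ) < t := by linarith
  have hLpos : (0:ℝ) < LL l := by linarith
  have hLt : (0:ℝ) < LL l * t := mul_pos hLpos htpos
  have hq0 : 0 ≤ qsum l yI t x := qsum_nonneg l yI t x
  have hinv0 : (0:ℝ) ≤ t⁻¹ := by positivity
  have hψmem := psiF_mem l yI (α := α) (t := t) hα0.le x
  rcases lt_or_gt_of_ne hne with hlt | hgt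
  · -- inner region
    have hTheta : Theta (LL l) α t x = 1 := if_pos hlt
    constructor
    · obtain ⟨P, hP, hPb⟩ := psi_hasFDerivAt l yI hα0 t x
      have hev : (fun z => PhiF l yI α t z) =ᶠ[𝓝 x] (fun z => psiF l yI α t z) := by
        have hopen : IsOpen {z : E5 | ‖z‖ < LL l * t} :=
          isOpen_lt continuous_norm continuous_const
        filter_upwards [hopen.mem_nhds hlt] with z hz
        simp only [PhiF, Theta, if_pos (hz : ‖z‖ < LL l * t), one_mul]
      rw [grad_norm_eq, hev.fderiv_eq, hP.fderiv, hTheta]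
      nlinarith [mul_nonneg hα0.le hq0]
    · obtain ⟨d, hd, hdb⟩ := psi_hasDerivAt l yI hα0 (fun k => (hl k).le) t x
      have hev : (fun s => PhiF l yI α s x) =ᶠ[𝓝 t] (fun s => psiF l yI α s x) := by
        have hopen : IsOpen {s : ℝ | ‖x‖ < LL l * s} :=
          isOpen_lt continuous_const (continuous_const.mul continuous_id)
        filter_upwards [hopen.mem_nhds hlt] with s hs
        simp only [PhiF, Theta, if_pos (hs : ‖x‖ < LL l * s), one_mul]
      rw [hev.deriv_eq, hd.deriv, hTheta]
      calc |d| ≤ α * qsum l yI t x := hdb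
        _ ≤ 10 * α * 1 * (t⁻¹ + qsum l yI t x) := by
            nlinarith [mul_nonneg hα0.le hq0, mul_nonneg hα0.le hinv0]
  · -- outer region
    have hx0 : (0:ℝ) < ‖x‖ := lt_trans hLt hgt
    have hnl : ¬ ‖x‖ < LL l * t := not_lt.mpr hgt.le
    have hTheta : Theta (LL l) α t x = (LL l * t / ‖x‖) ^ α := if_neg hnl
    have hΘpos : 0 < Theta (LL l) α t x := by
      rw [hTheta]; exact Real.rpow_pos_of_pos (div_pos hLt hx0) _
    have hinv : ‖x‖⁻¹ ≤ 6 * qsum l yI t x :=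
      inv_norm_le_qsum hK l yI hl hL99 hgt.le ht1 hy
    have hΘq : Theta (LL l) α t x = (LL l * t) ^ α * ((‖x‖ ^ 2 : ℝ)) ^ (-(α/2)) :=
      theta_out _ _ _ _ hLt hnl
    constructor
    · -- gradient estimate, outer region
      obtain ⟨P, hP, hPb⟩ := psi_hasFDerivAt l yI hα0 t x
      have h1 : HasFDerivAt (fun z : E5 => ‖z‖ ^ 2)
          (2 • (innerSL ℝ x).comp (ContinuousLinearMap.id ℝ E5)) x :=
        (hasFDerivAt_id x).norm_sq
      have hx2 : ((‖x‖ ^ 2 : ℝ)) ≠ 0 := by positivity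
      have h2 := h1.rpow_const (p := -(α/2)) (Or.inl hx2)
      have h3 := h2.const_mul ((LL l * t) ^ α)
      have hmul : HasFDerivAt (fun z => ((LL l * t) ^ α * ((‖z‖ ^ 2 : ℝ)) ^ (-(α/2))) * psiF l yI α t z) _ x := h3.mul hP
      have hev : (fun z => PhiF l yI α t z) =ᶠ[𝓝 x]
          (fun z => ((LL l * t) ^ α * ((‖z‖ ^ 2 : ℝ)) ^ (-(α/2))) * psiF l yI α t z) := by
        have hopen : IsOpen {z : E5 | LL l * t < ‖z‖} :=
          isOpen_lt continuous_const continuous_norm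
        filter_upwards [hopen.mem_nhds hgt] with z hz
        rw [PhiF, theta_out _ _ _ _ hLt (not_lt.mpr (hz : LL l * t < ‖z‖).le)]
      rw [grad_norm_eq, hev.fderiv_eq, hmul.fderiv]
      -- bound the operator norm
      have hDθ : ‖((-(α/2) * ((‖x‖ ^ 2 : ℝ)) ^ (-(α/2) - 1)) •
            (2 • (innerSL ℝ x).comp (ContinuousLinearMap.id ℝ E5)))‖ ≤
          α * ((‖x‖ ^ 2 : ℝ)) ^ (-(α/2) - 1) * ‖x‖ := by
        have hb : ‖(2 • (innerSL ℝ x).comp (ContinuousLinearMap.id ℝ E5) : E5 →L[ℝ] ℝ)‖ ≤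
            2 * ‖x‖ := by
          rw [two_smul]
          calc ‖(innerSL ℝ x).comp (ContinuousLinearMap.id ℝ E5) +
                (innerSL ℝ x).comp (ContinuousLinearMap.id ℝ E5)‖ ≤
              ‖(innerSL ℝ x).comp (ContinuousLinearMap.id ℝ E5)‖ +
                ‖(innerSL ℝ x).comp (ContinuousLinearMap.id ℝ E5)‖ := norm_add_le _ _
            _ = 2 * ‖x‖ := by rw [ContinuousLinearMap.comp_id, innerSL_apply_norm]; ring
        have habs : ‖-(α/2) * ((‖x‖ ^ 2 : ℝ)) ^ (-(α/2) - 1)‖ =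
            (α/2) * ((‖x‖ ^ 2 : ℝ)) ^ (-(α/2) - 1) := by
          rw [Real.norm_eq_abs, abs_mul,
            abs_of_nonneg (Real.rpow_nonneg (by positivity : (0:ℝ) ≤ ‖x‖ ^ 2) _)]
          rw [abs_neg, abs_of_nonneg (by linarith : (0:ℝ) ≤ α/2)]
        calc ‖((-(α/2) * ((‖x‖ ^ 2 : ℝ)) ^ (-(α/2) - 1)) •
              (2 • (innerSL ℝ x).comp (ContinuousLinearMap.id ℝ E5)))‖ ≤
            ‖-(α/2) * ((‖x‖ ^ 2 : ℝ)) ^ (-(α/2) - 1)‖ *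
              ‖(2 • (innerSL ℝ x).comp (ContinuousLinearMap.id ℝ E5) : E5 →L[ℝ] ℝ)‖ :=
              ContinuousLinearMap.opNorm_smul_le _ _
          _ ≤ ((α/2) * ((‖x‖ ^ 2 : ℝ)) ^ (-(α/2) - 1)) * (2 * ‖x‖) := by
              rw [habs]
              apply mul_le_mul_of_nonneg_left hb (by positivity)
          _ = α * ((‖x‖ ^ 2 : ℝ)) ^ (-(α/2) - 1) * ‖x‖ := by ring
      have hsplit : ((‖x‖ ^ 2 : ℝ)) ^ (-(α/2) - 1) * ‖x‖ =
          ((‖x‖ ^ 2 : ℝ)) ^ (-(α/2)) * ‖x‖⁻¹ := by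
        rw [show (-(α/2) - 1 : ℝ) = -(α/2) + (-1) by ring,
          Real.rpow_add (by positivity : (0:ℝ) < ‖x‖ ^ 2), Real.rpow_neg_one]
        field_simp
      have hθx : (0:ℝ) ≤ (LL l * t) ^ α := Real.rpow_nonneg hLt.le _
      have hDθ2 : ‖((LL l * t) ^ α • ((-(α/2) * ((‖x‖ ^ 2 : ℝ)) ^ (-(α/2) - 1)) •
            (2 • (innerSL ℝ x).comp (ContinuousLinearMap.id ℝ E5))))‖ ≤
          α * Theta (LL l) α t x * ‖x‖⁻¹ := by
        calc ‖((LL l * t) ^ α • ((-(α/2) * ((‖x‖ ^ 2 : ℝ)) ^ (-(α/2) - 1)) •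
              (2 • (innerSL ℝ x).comp (ContinuousLinearMap.id ℝ E5))))‖ ≤
            ‖(LL l * t) ^ α‖ * ‖((-(α/2) * ((‖x‖ ^ 2 : ℝ)) ^ (-(α/2) - 1)) •
              (2 • (innerSL ℝ x).comp (ContinuousLinearMap.id ℝ E5)))‖ :=
              ContinuousLinearMap.opNorm_smul_le _ _
          _ ≤ (LL l * t) ^ α * (α * ((‖x‖ ^ 2 : ℝ)) ^ (-(α/2) - 1) * ‖x‖) := by
              rw [Real.norm_eq_abs, abs_of_nonneg hθx]
              exact mul_le_mul_of_nonneg_left hDθ hθx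
          _ = α * ((LL l * t) ^ α * (((‖x‖ ^ 2 : ℝ)) ^ (-(α/2) - 1) * ‖x‖)) := by ring
          _ = α * Theta (LL l) α t x * ‖x‖⁻¹ := by rw [hsplit, hΘq]; ring
      have hψabs : |psiF l yI α t x| ≤ 1 := by
        rw [abs_of_nonneg hψmem.1]; exact hψmem.2
      calc ‖(((LL l * t) ^ α * ((‖x‖ ^ 2 : ℝ)) ^ (-(α/2))) • P +
            psiF l yI α t x • ((LL l * t) ^ α • ((-(α/2) * ((‖x‖ ^ 2 : ℝ)) ^ (-(α/2) - 1)) •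
              (2 • (innerSL ℝ x).comp (ContinuousLinearMap.id ℝ E5)))))‖ ≤
          ‖((LL l * t) ^ α * ((‖x‖ ^ 2 : ℝ)) ^ (-(α/2))) • P‖ +
            ‖psiF l yI α t x • ((LL l * t) ^ α • ((-(α/2) * ((‖x‖ ^ 2 : ℝ)) ^ (-(α/2) - 1)) •
              (2 • (innerSL ℝ x).comp (ContinuousLinearMap.id ℝ E5))))‖ := norm_add_le _ _
        _ ≤ Theta (LL l) α t x * (α * qsum l yI t x) +
            1 * (α * Theta (LL l) α t x * ‖x‖⁻¹) := by
            apply add_le_add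
            · calc ‖((LL l * t) ^ α * ((‖x‖ ^ 2 : ℝ)) ^ (-(α/2))) • P‖ ≤
                  ‖(LL l * t) ^ α * ((‖x‖ ^ 2 : ℝ)) ^ (-(α/2))‖ * ‖P‖ :=
                    ContinuousLinearMap.opNorm_smul_le _ _
                _ ≤ Theta (LL l) α t x * (α * qsum l yI t x) := by
                    rw [Real.norm_eq_abs, ← hΘq, abs_of_nonneg hΘpos.le]
                    exact mul_le_mul_of_nonneg_left hPb hΘpos.le
            · calc ‖psiF l yI α t x • ((LL l * t) ^ α •
                    ((-(α/2) * ((‖x‖ ^ 2 : ℝ)) ^ (-(α/2) - 1)) •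
                    (2 • (innerSL ℝ x).comp (ContinuousLinearMap.id ℝ E5))))‖ ≤
                  ‖psiF l yI α t x‖ * ‖((LL l * t) ^ α •
                    ((-(α/2) * ((‖x‖ ^ 2 : ℝ)) ^ (-(α/2) - 1)) •
                    (2 • (innerSL ℝ x).comp (ContinuousLinearMap.id ℝ E5))))‖ :=
                    ContinuousLinearMap.opNorm_smul_le _ _
                _ ≤ 1 * (α * Theta (LL l) α t x * ‖x‖⁻¹) := by
                    apply mul_le_mul (by rw [Real.norm_eq_abs]; exact hψabs) hDθ2
                      (norm_nonneg _) one_pos.le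
        _ ≤ 10 * α * Theta (LL l) α t x * qsum l yI t x := by
            have e1 : α * Theta (LL l) α t x * ‖x‖⁻¹ ≤
                α * Theta (LL l) α t x * (6 * qsum l yI t x) :=
              mul_le_mul_of_nonneg_left hinv (by positivity)
            nlinarith [mul_nonneg (mul_nonneg hα0.le hΘpos.le) hq0]
    · -- time derivative, outer region
      obtain ⟨d, hd, hdb⟩ := psi_hasDerivAt l yI hα0 (fun k => (hl k).le) t x
      have h1 : HasDerivAt (fun s : ℝ => s ^ α) (α * t ^ (α - 1)) t :=
        Real.hasDerivAt_rpow_const (Or.inl htpos.ne')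
      have h2 : HasDerivAt (fun s => s ^ α * psiF l yI α s x) _ t := h1.mul hd
      have h3 := h2.const_mul ((LL l / ‖x‖) ^ α)
      have hev : (fun s => PhiF l yI α s x) =ᶠ[𝓝 t]
          (fun s => (LL l / ‖x‖) ^ α * (s ^ α * psiF l yI α s x)) := by
        have hopen : IsOpen {s : ℝ | LL l * s < ‖x‖ ∧ 0 < s} :=
          (isOpen_lt (continuous_const.mul continuous_id) continuous_const).inter
            (isOpen_lt continuous_const continuous_id)
        filter_upwards [hopen.mem_nhds ⟨hgt, htpos⟩] with s hs
        rw [PhiF, Theta, if_neg (not_lt.mpr hs.1.le),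
          show LL l * s / ‖x‖ = (LL l / ‖x‖) * s by ring,
          Real.mul_rpow (by positivity) hs.2.le]
        ring
      rw [hev.deriv_eq, h3.deriv]
      have hc : (0:ℝ) ≤ (LL l / ‖x‖) ^ α := Real.rpow_nonneg (by positivity) _
      have htα : (0:ℝ) ≤ t ^ α := Real.rpow_nonneg htpos.le _
      have htα1 : (0:ℝ) ≤ t ^ (α - 1) := Real.rpow_nonneg htpos.le _
      have hψabs : |psiF l yI α t x| ≤ 1 := by
        rw [abs_of_nonneg hψmem.1]; exact hψmem.2
      have hid1 : (LL l / ‖x‖) ^ α * t ^ α = Theta (LL l) α t x := by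
        rw [hTheta, show LL l * t / ‖x‖ = (LL l / ‖x‖) * t by ring,
          Real.mul_rpow (by positivity) htpos.le]
      have hid2 : t ^ (α - 1) = t ^ α * t⁻¹ := by
        rw [Real.rpow_sub htpos, Real.rpow_one]; ring
      calc |(LL l / ‖x‖) ^ α * (α * t ^ (α - 1) * psiF l yI α t x + t ^ α * d)|
          = (LL l / ‖x‖) ^ α * |α * t ^ (α - 1) * psiF l yI α t x + t ^ α * d| := by
            rw [abs_mul, abs_of_nonneg hc]
        _ ≤ (LL l / ‖x‖) ^ α * (α * t ^ (α - 1) + t ^ α * (α * qsum l yI t x)) := by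
            apply mul_le_mul_of_nonneg_left _ hc
            calc |α * t ^ (α - 1) * psiF l yI α t x + t ^ α * d| ≤
                |α * t ^ (α - 1) * psiF l yI α t x| + |t ^ α * d| := abs_add_le _ _
              _ ≤ α * t ^ (α - 1) + t ^ α * (α * qsum l yI t x) := by
                  have e1 : |α * t ^ (α - 1) * psiF l yI α t x| ≤ α * t ^ (α - 1) := by
                    rw [abs_mul, abs_mul, abs_of_nonneg hα0.le, abs_of_nonneg htα1]
                    nlinarith [abs_nonneg (psiF l yI α t x),
                      mul_nonneg hα0.le htα1]
                  have e2 : |t ^ α * d| ≤ t ^ α * (α * qsum l yI t x) := by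
                    rw [abs_mul, abs_of_nonneg htα]
                    exact mul_le_mul_of_nonneg_left hdb htα
                  linarith
        _ = α * Theta (LL l) α t x * t⁻¹ + α * Theta (LL l) α t x * qsum l yI t x := by
            rw [hid2, ← hid1]; ring
        _ ≤ 10 * α * Theta (LL l) α t x * (t⁻¹ + qsum l yI t x) := by
            nlinarith [mul_nonneg (mul_nonneg hα0.le hΘpos.le) hq0,
              mul_nonneg (mul_nonneg hα0.le hΘpos.le) hinv0]
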